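/- Let R be a symmetric n×n matrix with zero diagonal such that I - R is positive definite but ρ(|R|) ≥ 1. Then for γ = ρ(|R|) - 1 + ε with any ε > 0, the matrix J' = (1+γ)I - R is positive definite, walk-summable after normalization, and for Γ = γI the iteration x^{(t+1)} = J'^{-1}(h + γ x^{(t)}) converges to (I-R)^{-1} h for any h and any initialization. -/

import Mathlib

/-!
Diagonal loading by `γ > 0` keeps `A = (1 - R) + γ • 1` positive definite, and rescaling by
`(1 + γ)⁻¹` divides `ρ(|R|)` by `1 + γ = ρ(|R|) + ε`. The iteration is the affine recurrence
`x ↦ γ A⁻¹ x + A⁻¹ h`, whose fixed point solves `(1 - R) x = h`. The iteration matrix `γ A⁻¹` is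
Hermitian, and for an eigenvector `v` with eigenvalue `μ` one gets `γ (1 - μ) v = μ (1 - R) v`,
so `0 < μ < 1`; hence its powers tend to zero and the iterates converge.
-/

open Matrix Filter

noncomputable def specRad {n : ℕ} (M : Matrix (Fin n) (Fin n) ℝ) : ℝ :=
  sSup ((fun z : ℂ => ‖z‖) '' spectrum ℂ (M.map Complex.ofReal))

open scoped Topology Pointwise ComplexOrder

theorem specRad_smul {n : ℕ} {c : ℝ} (hc : 0 < c) (M : Matrix (Fin n) (Fin n) ℝ) :
    specRad (c • M) = c * specRad M := by
  let u : ℂˣ := Units.mk0 c (by exact_mod_cast hc.ne')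
  have hmap : (c • M).map Complex.ofReal = u • M.map Complex.ofReal := by
    ext i j
    simp [u, Units.smul_def]
  have himg : (fun z : ℂ => ‖z‖) '' (u • spectrum ℂ (M.map Complex.ofReal))
      = c • (fun z : ℂ => ‖z‖) '' spectrum ℂ (M.map Complex.ofReal) := by
    rw [← Set.image_smul, ← Set.image_smul, Set.image_image, Set.image_image]
    refine Set.image_congr fun z _ => ?_
    simp [u, Units.smul_def, hc.le]
  unfold specRad
  rw [hmap, spectrum.unit_smul_eq_smul, himg, Real.sSup_smul_of_nonneg hc.le, smul_eq_mul]

namespace Matrix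

theorem map_abs_smul {m n : Type*} (c : ℝ) (M : Matrix m n ℝ) :
    (c • M).map (fun x => |x|) = |c| • M.map (fun x => |x|) := by
  ext i j
  simp [abs_mul]

theorem tendsto_iterate_mulVec_add_of_tendsto_pow {R : Type*} [CommRing R] [TopologicalSpace R]
    [IsTopologicalRing R] {n : Type*} [Fintype n] [DecidableEq n] {M : Matrix n n R}
    (hM : Tendsto (fun t : ℕ => M ^ t) atTop (𝓝 0)) {c x₀ : n → R} (hfix : M *ᵥ x₀ + c = x₀)
    {x : ℕ → n → R} (hx : ∀ t, x (t + 1) = M *ᵥ x t + c) : Tendsto x atTop (𝓝 x₀) := by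
  have herr : ∀ t, x t = x₀ + M ^ t *ᵥ (x 0 - x₀) := by
    intro t
    induction t with
    | zero => simp
    | succ t ih =>
      rw [hx, ih, mulVec_add, mulVec_mulVec, ← pow_succ', add_right_comm, hfix]
  have hlim := tendsto_const_nhds (x := x₀) |>.add
    ((continuous_id.matrix_mulVec (continuous_const (y := x 0 - x₀))).tendsto 0 |>.comp hM)
  simpa [Function.comp_def, ← herr] using hlim

variable {𝕜 : Type*} [RCLike 𝕜] {n : Type*} [DecidableEq n]

theorem PosDef.add_smul_one {B : Matrix n n 𝕜} (hB : B.PosDef) {γ : ℝ} (hγ : 0 ≤ γ) :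
    (B + γ • 1).PosDef :=
  hB.add_posSemidef (PosSemidef.one.smul hγ)

variable [Fintype n]

theorem IsHermitian.tendsto_pow_atTop_nhds_zero {A : Matrix n n 𝕜} (hA : A.IsHermitian)
    (h : ∀ i, |hA.eigenvalues i| < 1) : Tendsto (fun t : ℕ => A ^ t) atTop (𝓝 0) := by
  set φ := Unitary.conjStarAlgAut 𝕜 _ hA.eigenvectorUnitary
  have hpow : ∀ t : ℕ, A ^ t = φ (diagonal fun i => (hA.eigenvalues i : 𝕜) ^ t) := by
    intro t
    conv_lhs => rw [hA.spectral_theorem]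
    rw [← map_pow, diagonal_pow]
    rfl
  have hφ : Continuous φ := by
    have : (φ : Matrix n n 𝕜 → Matrix n n 𝕜) = fun X => _ * X * _ :=
      funext (Unitary.conjStarAlgAut_apply _)
    rw [this]
    fun_prop
  have hdiag : Tendsto (fun t : ℕ => diagonal fun i => (hA.eigenvalues i : 𝕜) ^ t) atTop
      (𝓝 (diagonal 0)) := by
    refine (continuous_id.matrix_diagonal.tendsto _).comp (tendsto_pi_nhds.mpr fun i => ?_)
    exact tendsto_pow_atTop_nhds_zero_of_norm_lt_one (by simpa using h i)
  simpa [Function.comp_def, ← hpow] using (hφ.tendsto _).comp hdiag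

theorem PosDef.smul_inv_add_smul_one {B : Matrix n n 𝕜} (hB : B.PosDef) {γ : ℝ} (hγ : 0 < γ) :
    (γ • (B + γ • 1)⁻¹).PosDef :=
  (hB.add_smul_one hγ.le).inv.smul hγ

theorem PosDef.abs_eigenvalues_smul_inv_add_smul_one_lt_one {B : Matrix n n 𝕜} (hB : B.PosDef)
    {γ : ℝ} (hγ : 0 < γ) (i : n) :
    |(hB.smul_inv_add_smul_one hγ).isHermitian.eigenvalues i| < 1 := by
  set hM := (hB.smul_inv_add_smul_one hγ).isHermitian
  set A := B + γ • (1 : Matrix n n 𝕜)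
  set v := ⇑(hM.eigenvectorBasis i)
  set μ := hM.eigenvalues i
  have hA : IsUnit A.det := (isUnit_iff_isUnit_det _).mp (hB.add_smul_one hγ.le).isUnit
  have hv : v ≠ 0 := fun h0 =>
    hM.eigenvectorBasis.orthonormal.ne_zero i (by ext j; exact congrFun h0 j)
  have hμ : 0 < μ := (hB.smul_inv_add_smul_one hγ).eigenvalues_pos i
  have hload : (γ * (1 - μ)) • v = μ • (B *ᵥ v) := by
    have h := congrArg (A *ᵥ ·) (hM.mulVec_eigenvectorBasis i)
    simp only [smul_mulVec, mulVec_mulVec, mul_nonsing_inv _ hA, one_mulVec, mulVec_smul] at h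
    simp only [A, add_mulVec, smul_mulVec, one_mulVec, smul_add] at h
    linear_combination (norm := module) h
  have hre := congrArg (fun w => RCLike.re (star v ⬝ᵥ w)) hload
  simp only [dotProduct_smul, RCLike.smul_re] at hre
  have hv2 : 0 < RCLike.re (star v ⬝ᵥ v) := by simpa using PosDef.one.re_dotProduct_pos hv
  have hγμ : 0 < γ * (1 - μ) :=
    pos_of_mul_pos_left (hre ▸ mul_pos hμ (hB.re_dotProduct_pos hv)) hv2.le
  exact abs_lt.mpr ⟨by linarith, by linarith [pos_of_mul_pos_right hγμ hγ.le]⟩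

theorem PosDef.tendsto_iterate_diagonal_loading {B : Matrix n n 𝕜} (hB : B.PosDef) {γ : ℝ}
    (hγ : 0 < γ) (h : n → 𝕜) {x : ℕ → n → 𝕜}
    (hx : ∀ t, x (t + 1) = (B + γ • 1)⁻¹ *ᵥ (h + γ • x t)) :
    Tendsto x atTop (𝓝 (B⁻¹ *ᵥ h)) := by
  have hA : IsUnit (B + γ • 1).det := (isUnit_iff_isUnit_det _).mp (hB.add_smul_one hγ.le).isUnit
  have hBdet : IsUnit B.det := (isUnit_iff_isUnit_det _).mp hB.isUnit
  refine tendsto_iterate_mulVec_add_of_tendsto_pow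
    ((hB.smul_inv_add_smul_one hγ).isHermitian.tendsto_pow_atTop_nhds_zero
      (hB.abs_eigenvalues_smul_inv_add_smul_one_lt_one hγ)) (c := (B + γ • 1)⁻¹ *ᵥ h) ?_
    fun t => by rw [hx, mulVec_add, smul_mulVec, mulVec_smul, add_comm]
  have hfix : (B + γ • 1) *ᵥ B⁻¹ *ᵥ h = γ • B⁻¹ *ᵥ h + h := by
    rw [add_mulVec, mulVec_mulVec, mul_nonsing_inv _ hBdet, smul_mulVec, one_mulVec, one_mulVec,
      add_comm]
  rw [smul_mulVec, ← mulVec_smul, ← mulVec_add, ← hfix, mulVec_mulVec, nonsing_inv_mul _ hA,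
    one_mulVec]

end Matrix

theorem double_loop_converges_general {n : ℕ} (R : Matrix (Fin n) (Fin n) ℝ)
    (hpd : (1 - R).PosDef)
    (hnws : 1 ≤ specRad (R.map (fun x => |x|)))
    (ε : ℝ) (hε : 0 < ε) (γ : ℝ) (hγ : γ = specRad (R.map (fun x => |x|)) - 1 + ε) :
    ((1 + γ) • (1 : Matrix (Fin n) (Fin n) ℝ) - R).PosDef ∧
    specRad ((((1 + γ)⁻¹ : ℝ) • R).map (fun x => |x|)) < 1 ∧
    ∀ (h : Fin n → ℝ) (x : ℕ → Fin n → ℝ),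
      (∀ t, x (t + 1) =
        ((1 + γ) • (1 : Matrix (Fin n) (Fin n) ℝ) - R)⁻¹ *ᵥ (h + γ • x t)) →
      Tendsto x atTop (nhds ((1 - R)⁻¹ *ᵥ h)) := by
  have hγ0 : 0 < γ := by linarith
  have hload : (1 + γ) • (1 : Matrix (Fin n) (Fin n) ℝ) - R = (1 - R) + γ • 1 := by
    rw [add_smul, one_smul]
    abel
  refine ⟨hload ▸ hpd.add_smul_one hγ0.le, ?_, fun h x hx =>
    hpd.tendsto_iterate_diagonal_loading hγ0 h (hload ▸ hx)⟩
  rw [map_abs_smul, abs_of_pos (by positivity), specRad_smul (by positivity),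
    inv_mul_lt_iff₀ (by positivity)]
  linarith

theorem double_loop_converges {n : ℕ} (R : Matrix (Fin n) (Fin n) ℝ)
    (hsym : R.IsSymm) (hdiag : ∀ i, R i i = 0)
    (hpd : (1 - R).PosDef)
    (hnws : 1 ≤ specRad (R.map (fun x => |x|)))
    (ε : ℝ) (hε : 0 < ε) (γ : ℝ) (hγ : γ = specRad (R.map (fun x => |x|)) - 1 + ε) :
    ((1 + γ) • (1 : Matrix (Fin n) (Fin n) ℝ) - R).PosDef ∧
    specRad ((((1 + γ)⁻¹ : ℝ) • R).map (fun x => |x|)) < 1 ∧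
    ∀ (h : Fin n → ℝ) (x : ℕ → Fin n → ℝ),
      (∀ t, x (t + 1) =
        ((1 + γ) • (1 : Matrix (Fin n) (Fin n) ℝ) - R)⁻¹ *ᵥ (h + γ • x t)) →
      Tendsto x atTop (nhds ((1 - R)⁻¹ *ᵥ h)) :=
  double_loop_converges_general R hpd hnws ε hε γ hγ
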